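/- Let ℓ ≥ 2 and let f_1,…,f_ℓ : [0,1] → [0,1] be functions each of which maps (0,1) into (0,1). Let g : [0,1] → [0,∞), define g_0 = g and g_{n+1}(z) = (1/ℓ) ∑_{i=1}^ℓ g_n(f_i(z)), and suppose b ∈ (0,1) satisfies g_1(z) ≤ b·g(z) for all z ∈ (0,1). Fix z ∈ (0,1) and 0 < a ≤ b' < 1 with inf_{y ∈ [a,b']} g(y) > 0. Let Z_n be the process on Ω = (Fin ℓ)^ℕ with the infinite product μ of uniform probability measures defined by Z_0(ω) = z and Z_{n+1}(ω) = f_{ω(n)}(Z_n(ω)). Suppose the scaling assumption holds: there exist μ₀ > 0 and L ∈ (0,∞) such that lim_{n→∞} ℓ^{n/μ₀} · μ({ω : Z_n(ω) ∈ [a,b']}) = L. Then μ₀ ≤ (log ℓ)/(− log b), i.e., μ₀ ≤ −1/log_ℓ b. -/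

import Mathlib

open MeasureTheory

/-- The sequence of functions `g_0 = g`, `g_{n+1}(z) = (1/ℓ) ∑ᵢ g_n(f_i(z))`. -/
noncomputable def gseq {ℓ : ℕ} (f : Fin ℓ → ℝ → ℝ) (g : ℝ → ℝ) : ℕ → ℝ → ℝ
  | 0 => g
  | n + 1 => fun z => (1 / ℓ : ℝ) * ∑ i, gseq f g n (f i z)

/-- The random process `Z_0(ω) = z`, `Z_{n+1}(ω) = f_{ω(n)}(Z_n(ω))`. -/
def Zproc {ℓ : ℕ} (f : Fin ℓ → ℝ → ℝ) (z : ℝ) : ℕ → (ℕ → Fin ℓ) → ℝ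
  | 0 => fun _ => z
  | n + 1 => fun ω => f (ω n) (Zproc f z n ω)

/-- `μ` is the infinite product of uniform probability measures on `Fin ℓ`:
it is a probability measure giving each cylinder on the first `n` coordinates
measure `(1/ℓ)^n`. -/
def IsProductOfUniforms {ℓ : ℕ} (μ : Measure (ℕ → Fin ℓ)) : Prop :=
  IsProbabilityMeasure μ ∧
    ∀ (n : ℕ) (y : Fin n → Fin ℓ),
      μ {ω | ∀ k : Fin n, ω (k : ℕ) = y k} = ((ℓ : ENNReal))⁻¹ ^ n

/-!
`Z_n` is a deterministic function of the first `n` letters of `ω`, all words being equally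
likely, so `g_n(z)` is the expectation of `g(Z_n)`. As `g ≥ 0` along the orbit and
`g ≥ m := inf_{[a,b']} g` on `[a,b']`, `m · P(Z_n ∈ [a,b']) ≤ g_n(z) ≤ bⁿ g(z)`. Hence
`ℓ^{n/μ₀} P(Z_n ∈ [a,b']) ≤ (g(z)/m) (ℓ^{1/μ₀} b)ⁿ`, and since the left side tends to `L > 0`,
`ℓ^{1/μ₀} b ≥ 1`, which is the claim after taking logarithms.
-/

open Set Filter Topology

section WordIteration

variable {ℓ : ℕ} (f : Fin ℓ → ℝ → ℝ)

def applyWord : (n : ℕ) → ℝ → (Fin n → Fin ℓ) → ℝ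
  | 0, z, _ => z
  | n + 1, z, y => applyWord n (f (y 0) z) (Fin.tail y)

theorem mapsTo_applyWord {s : Set ℝ} (hfs : ∀ i, MapsTo (f i) s s) (n : ℕ) (y : Fin n → Fin ℓ) :
    MapsTo (applyWord f n · y) s s := by
  induction n with
  | zero => exact mapsTo_id s
  | succ n ih => exact fun z hz => ih (Fin.tail y) (hfs (y 0) hz)

theorem Zproc_succ_eq_shift (n : ℕ) (z : ℝ) (ω : ℕ → Fin ℓ) :
    Zproc f z (n + 1) ω = Zproc f (f (ω 0) z) n (fun k => ω (k + 1)) := by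
  induction n with
  | zero => rfl
  | succ n ih => exact congrArg (f (ω (n + 1))) ih

theorem Zproc_eq_applyWord (n : ℕ) (z : ℝ) (ω : ℕ → Fin ℓ) :
    Zproc f z n ω = applyWord f n z (fun k => ω k) := by
  induction n generalizing z ω with
  | zero => rfl
  | succ n ih => rw [Zproc_succ_eq_shift, ih]; rfl

theorem gseq_eq_average (g : ℝ → ℝ) (n : ℕ) (z : ℝ) :
    gseq f g n z = (1 / ℓ : ℝ) ^ n * ∑ y : Fin n → Fin ℓ, g (applyWord f n z y) := by
  induction n generalizing z with
  | zero => simp [gseq, applyWord]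
  | succ n ih =>
    rw [gseq, ← (Fin.consEquiv fun _ => Fin ℓ).sum_comp, Fintype.sum_prod_type, pow_succ',
      mul_assoc, Finset.mul_sum]
    simp only [ih]
    rfl

theorem gseq_le_pow_mul {s : Set ℝ} (hfs : ∀ i, MapsTo (f i) s s) {g : ℝ → ℝ} {b : ℝ}
    (hb : 0 ≤ b) (hbg : ∀ z ∈ s, gseq f g 1 z ≤ b * g z) (n : ℕ) :
    ∀ z ∈ s, gseq f g n z ≤ b ^ n * g z := by
  induction n with
  | zero => simp [gseq]
  | succ n ih =>
    intro z hz
    calc gseq f g (n + 1) z = (1 / ℓ : ℝ) * ∑ i, gseq f g n (f i z) := rfl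
      _ ≤ (1 / ℓ : ℝ) * ∑ i, b ^ n * g (f i z) := by
        gcongr with i; exact ih _ (hfs i hz)
      _ = b ^ n * gseq f g 1 z := by simp only [gseq, ← Finset.mul_sum]; ring
      _ ≤ b ^ n * (b * g z) := by gcongr; exact hbg z hz
      _ = b ^ (n + 1) * g z := by ring

end WordIteration

section Measure

variable {ℓ : ℕ} {μ : Measure (ℕ → Fin ℓ)}

theorem IsProductOfUniforms.measure_prefix_preimage (hμ : IsProductOfUniforms μ) (n : ℕ)
    (W : Finset (Fin n → Fin ℓ)) :
    μ ((fun (ω : ℕ → Fin ℓ) (k : Fin n) => ω k) ⁻¹' W) = W.card * (ℓ : ENNReal)⁻¹ ^ n := by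
  have hmeas : Measurable fun (ω : ℕ → Fin ℓ) (k : Fin n) => ω k :=
    measurable_pi_lambda _ fun k => measurable_pi_apply _
  rw [← sum_measure_preimage_singleton W fun y _ => hmeas (measurableSet_singleton y)]
  simp only [Set.preimage, Set.mem_singleton_iff, funext_iff, hμ.2, Finset.sum_const,
    nsmul_eq_mul]

open Classical in
theorem IsProductOfUniforms.measure_Zproc_mem (hμ : IsProductOfUniforms μ)
    (f : Fin ℓ → ℝ → ℝ) (z : ℝ) (n : ℕ) (T : Set ℝ) :
    μ {ω | Zproc f z n ω ∈ T} =
      (Finset.univ.filter fun y => applyWord f n z y ∈ T).card * (ℓ : ENNReal)⁻¹ ^ n := by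
  rw [← hμ.measure_prefix_preimage]
  simp [Zproc_eq_applyWord]

theorem IsProductOfUniforms.mul_measure_Zproc_mem_le_gseq (hμ : IsProductOfUniforms μ) (f : Fin ℓ → ℝ → ℝ) {s T : Set ℝ}
    (hfs : ∀ i, MapsTo (f i) s s) {g : ℝ → ℝ} (hg : ∀ y ∈ s, 0 ≤ g y) {m : ℝ}
    (hm : ∀ y ∈ T, m ≤ g y) {z : ℝ} (hz : z ∈ s) (n : ℕ) :
    m * (μ {ω | Zproc f z n ω ∈ T}).toReal ≤ gseq f g n z := by
  classical
  set W := Finset.univ.filter fun y => applyWord f n z y ∈ T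
  have hW : W.card • m ≤ ∑ y ∈ W, g (applyWord f n z y) :=
    W.card_nsmul_le_sum _ _ fun y hy => hm _ (Finset.mem_filter.1 hy).2
  have hall : ∑ y ∈ W, g (applyWord f n z y) ≤ ∑ y, g (applyWord f n z y) :=
    Finset.sum_le_sum_of_subset_of_nonneg W.subset_univ fun y _ _ =>
      hg _ (mapsTo_applyWord f hfs n y hz)
  rw [hμ.measure_Zproc_mem, gseq_eq_average, ENNReal.toReal_mul, ENNReal.toReal_pow,
    ENNReal.toReal_inv, ENNReal.toReal_natCast, ENNReal.toReal_natCast]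
  calc m * (W.card * (ℓ : ℝ)⁻¹ ^ n) = (1 / ℓ : ℝ) ^ n * (W.card • m) := by
        rw [nsmul_eq_mul, one_div]; ring
    _ ≤ (1 / ℓ : ℝ) ^ n * ∑ y, g (applyWord f n z y) := by gcongr; exact hW.trans hall

end Measure

theorem one_le_of_tendsto_of_le_mul_pow {u : ℕ → ℝ} {L C r : ℝ}
    (hu : Tendsto u atTop (𝓝 L)) (hL : 0 < L) (hr : 0 ≤ r) (hle : ∀ n, u n ≤ C * r ^ n) :
    1 ≤ r := by
  by_contra! hr1
  have hlim : Tendsto (fun n => C * r ^ n) atTop (𝓝 0) := by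
    simpa using (tendsto_pow_atTop_nhds_zero_of_lt_one hr hr1).const_mul C
  linarith [le_of_tendsto_of_tendsto' hu hlim hle]

theorem le_log_div_neg_log_of_one_le_rpow_mul {x b μ₀ : ℝ} (hx : 0 < x) (hb : 0 < b)
    (hb1 : b < 1) (hμ₀ : 0 < μ₀) (h : 1 ≤ x ^ (1 / μ₀) * b) :
    μ₀ ≤ Real.log x / -Real.log b := by
  have hlog := Real.log_nonneg h
  rw [Real.log_mul (by positivity) hb.ne', Real.log_rpow hx] at hlog
  rw [le_div_iff₀ (neg_pos.2 (Real.log_neg hb hb1))]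
  have := mul_nonneg hμ₀.le hlog
  field_simp at this
  linarith

theorem scaling_exponent_bound_general {ℓ : ℕ} (hℓ : 2 ≤ ℓ) (f : Fin ℓ → ℝ → ℝ)
    (hf' : ∀ i, Set.MapsTo (f i) (Set.Ioo (0 : ℝ) 1) (Set.Ioo (0 : ℝ) 1))
    (g : ℝ → ℝ) (hg0 : ∀ y ∈ Set.Icc (0 : ℝ) 1, 0 ≤ g y)
    (b : ℝ) (hb : 0 < b) (hb1 : b < 1)
    (hbg : ∀ z ∈ Set.Ioo (0 : ℝ) 1, gseq f g 1 z ≤ b * g z)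
    (z : ℝ) (hz : z ∈ Set.Ioo (0 : ℝ) 1)
    (a b' : ℝ)
    (hm : 0 < sInf (g '' Set.Icc a b'))
    (μ : Measure (ℕ → Fin ℓ)) (hμ : IsProductOfUniforms μ)
    (μ₀ : ℝ) (hμ₀ : 0 < μ₀) (L : ℝ) (hL : 0 < L)
    (hscaling : Filter.Tendsto
      (fun n : ℕ => (ℓ : ℝ) ^ ((n : ℝ) / μ₀) *
        (μ {ω | Zproc f z n ω ∈ Set.Icc a b'}).toReal)
      Filter.atTop (nhds L)) :
    μ₀ ≤ Real.log ℓ / (-Real.log b) := by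
  set m := sInf (g '' Set.Icc a b')
  have hℓ_pos : (0 : ℝ) < ℓ := by positivity
  -- `sInf` of a set of reals that is not bounded below is `0`
  have hbdd : BddBelow (g '' Set.Icc a b') := by
    by_contra h
    exact hm.ne' (Real.sInf_of_not_bddBelow h)
  have hdecay (n : ℕ) : (μ {ω | Zproc f z n ω ∈ Set.Icc a b'}).toReal ≤ g z / m * b ^ n := by
    rw [div_mul_eq_mul_div, le_div_iff₀ hm, mul_comm _ m, mul_comm (g z)]
    exact (hμ.mul_measure_Zproc_mem_le_gseq f hf' (fun y hy => hg0 y (Ioo_subset_Icc_self hy))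
      (fun y hy => csInf_le hbdd (mem_image_of_mem g hy)) hz n).trans
      (gseq_le_pow_mul f hf' hb.le hbg n z hz)
  refine le_log_div_neg_log_of_one_le_rpow_mul hℓ_pos hb hb1 hμ₀ ?_
  refine one_le_of_tendsto_of_le_mul_pow (C := g z / m) hscaling hL (by positivity) fun n => ?_
  rw [div_eq_mul_one_div, mul_comm (n : ℝ), Real.rpow_mul_natCast hℓ_pos.le, mul_pow,
    mul_left_comm]
  gcongr
  exact hdecay n

/-- Under the scaling assumption, the scaling exponent `μ₀` satisfies
`μ₀ ≤ -1/log_ℓ b = log ℓ / (-log b)`. -/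
theorem scaling_exponent_bound {ℓ : ℕ} (hℓ : 2 ≤ ℓ) (f : Fin ℓ → ℝ → ℝ)
    (hf : ∀ i, Set.MapsTo (f i) (Set.Icc (0 : ℝ) 1) (Set.Icc (0 : ℝ) 1))
    (hf' : ∀ i, Set.MapsTo (f i) (Set.Ioo (0 : ℝ) 1) (Set.Ioo (0 : ℝ) 1))
    (g : ℝ → ℝ) (hg0 : ∀ y ∈ Set.Icc (0 : ℝ) 1, 0 ≤ g y)
    (b : ℝ) (hb : 0 < b) (hb1 : b < 1)
    (hbg : ∀ z ∈ Set.Ioo (0 : ℝ) 1, gseq f g 1 z ≤ b * g z)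
    (z : ℝ) (hz : z ∈ Set.Ioo (0 : ℝ) 1)
    (a b' : ℝ) (ha : 0 < a) (hab : a ≤ b') (hb' : b' < 1)
    (hm : 0 < sInf (g '' Set.Icc a b'))
    (μ : Measure (ℕ → Fin ℓ)) (hμ : IsProductOfUniforms μ)
    (μ₀ : ℝ) (hμ₀ : 0 < μ₀) (L : ℝ) (hL : 0 < L)
    (hscaling : Filter.Tendsto
      (fun n : ℕ => (ℓ : ℝ) ^ ((n : ℝ) / μ₀) *
        (μ {ω | Zproc f z n ω ∈ Set.Icc a b'}).toReal)
      Filter.atTop (nhds L)) :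
    μ₀ ≤ Real.log ℓ / (-Real.log b) :=
  scaling_exponent_bound_general hℓ f hf' g hg0 b hb hb1 hbg z hz a b' hm μ hμ μ₀ hμ₀ L hL hscaling
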